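/- arXiv:1506.03192 — 2 statements merged into one kernel-verified Lean document; each statement's English description precedes it below -/
import Mathlib

section
/- Let n ≥ 0 and set m = n − τ_0∘ϑ^n and i = ζ_0∘ϑ^n, where τ_0 = inf{k > 0 : S(k) ≥ 0} and ζ_0 = −S(τ_0 − 1). If m ≥ 0 (and τ_0∘ϑ^n < ∞), then i ∈ {0,…,|𝒫_m|−1} and χ(m,i) = n, where χ(m,k) = inf{j ≥ m+1 : S(j) = S(m+1) − k}. -/
open scoped Classical NNReal
noncomputable section

/-- Finite point measures on `(0,∞)`, modeled as multisets of atoms in `ℝ≥0`. -/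
abbrev PtM := Multiset ℝ≥0

/-- A stick: a life-length together with a finite point measure of birth times. -/
abbrev Stick := ℝ≥0 × PtM

/-- The space of doubly infinite sequences of sticks. -/
abbrev Om := ℤ → Stick

/-- The shift operator `θ_n`. -/
def theta (n : ℤ) (ω : Om) : Om := fun k => ω (n + k)

/-- The dual (time-reversal) operator `ϑ^n`. -/
def dual (n : ℤ) (ω : Om) : Om := fun k => ω (n - k - 1)

/-- Life length of the `k`-th individual. -/
def Vc (ω : Om) (k : ℤ) : ℝ≥0 := (ω k).1

/-- Point measure (ages at childbearing) of the `k`-th individual. -/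
def Pc (ω : Om) (k : ℤ) : PtM := (ω k).2

/-- The Lukasiewicz path `S`. -/
def Sw (ω : Om) (n : ℤ) : ℤ :=
  if 0 ≤ n then ∑ k ∈ Finset.range n.toNat, ((Multiset.card (Pc ω (k : ℤ)) : ℤ) - 1)
  else - ∑ k ∈ Finset.range (-n).toNat, ((Multiset.card (Pc ω (-(k : ℤ) - 1)) : ℤ) - 1)

/-- `π(ν)`: the supremum of the support (largest atom) of a finite point measure. -/
def piM (ν : PtM) : ℝ≥0 := ν.sup

/-- `Υ_j(ν)`: removes the `j` largest atoms of `ν`. -/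
def upsilon (j : ℕ) (ν : PtM) : PtM :=
  ((ν.sort (· ≤ ·)).take (Multiset.card ν - j) : List ℝ≥0)

/-- The map `Φ` driving the spine process dynamics. -/
def phiSp (Y : List PtM) (ν : PtM) : List PtM :=
  if ν = 0 then
    match Y.reverse.dropWhile (fun m => decide (Multiset.card m < 2)) with
    | [] => []
    | h :: t => (upsilon 1 h :: t).reverse
  else Y ++ [ν]

/-- The spine process `𝕊₀ⁿ`. -/
def spine (ω : Om) : ℕ → List PtM
  | 0 => []
  | n + 1 => phiSp (spine ω n) (Pc ω (n : ℤ))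

/-- `π` extended to finite sequences of point measures. -/
def piL (Y : List PtM) : ℝ≥0 := (Y.map piM).sum

/-- The chronological height process `ℍ(n) = π(𝕊₀ⁿ)`. -/
def Hchr (ω : Om) (n : ℕ) : ℝ≥0 := piL (spine ω n)

/-- The genealogical height process
`𝓗(n) = #{k ∈ {0,…,n−1} : S(k+1) ≤ min_{k+1 ≤ j ≤ n} S(j)}`. -/
def genH (ω : Om) (n : ℕ) : ℕ :=
  ((Finset.range n).filter
    (fun k : ℕ => ∀ j : ℕ, j ∈ Finset.Icc (k + 1) n → Sw ω ((k : ℤ) + 1) ≤ Sw ω (j : ℤ))).card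

/-- Weak ascending ladder height times `T(k)` (valued `⊤` if nonexistent). -/
def ladderT (ω : Om) : ℕ → ℕ∞
  | 0 => 0
  | k + 1 => sInf {x : ℕ∞ | ∃ m j : ℕ, x = (m : ℕ∞) ∧ ladderT ω k = (j : ℕ∞) ∧
      j < m ∧ Sw ω (j : ℤ) ≤ Sw ω (m : ℤ)}

/-- `T^{-1}(n) = min{k ≥ 0 : T(k) ≥ n}`. -/
def Tinv (ω : Om) (n : ℕ) : ℕ := sInf {k : ℕ | (n : ℕ∞) ≤ ladderT ω k}

/-- `T̃^{-1}(n) = max{k ≥ 0 : T(k) ≤ n}`. -/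
def tildeTinv (ω : Om) (n : ℕ) : ℕ := sSup {k : ℕ | ladderT ω k ≤ (n : ℕ∞)}

/-- First passage time upward `τ_ℓ = inf{k > 0 : S(k) ≥ ℓ}`. -/
def tauUp (ω : Om) (ℓ : ℤ) : ℕ∞ :=
  sInf {x : ℕ∞ | ∃ k : ℕ, x = (k : ℕ∞) ∧ 0 < k ∧ ℓ ≤ Sw ω (k : ℤ)}

/-- First hitting time downward `τ⁻_ℓ = inf{k ≥ 0 : S(k) = −ℓ}`. -/
def tauDown (ω : Om) (ℓ : ℤ) : ℕ∞ :=
  sInf {x : ℕ∞ | ∃ k : ℕ, x = (k : ℕ∞) ∧ Sw ω (k : ℤ) = -ℓ}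

/-- `τ_ℓ` as a natural number (junk value `0` when infinite). -/
def tauUpN (ω : Om) (ℓ : ℤ) : ℕ := (tauUp ω ℓ).toNat

/-- The undershoot `ζ_ℓ = ℓ − S(τ_ℓ − 1)`. -/
def zetaU (ω : Om) (ℓ : ℤ) : ℤ := ℓ - Sw ω ((tauUpN ω ℓ : ℤ) - 1)

/-- `μ_ℓ = Υ_{ζ_ℓ}(𝒫_{τ_ℓ − 1})`. -/
def muU (ω : Om) (ℓ : ℤ) : PtM := upsilon (zetaU ω ℓ).toNat (Pc ω ((tauUpN ω ℓ : ℤ) - 1))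

/-- `𝒬(k) = μ₀ ∘ θ_{T(k−1)}`. -/
def Qcal (ω : Om) (k : ℕ) : PtM := muU (theta ((ladderT ω (k - 1)).toNat : ℤ) ω) 0

/-- `𝕐(k) = π(𝒬(k))`. -/
def Ybb (ω : Om) (k : ℕ) : ℝ≥0 := piM (Qcal ω k)

/-- The backward maximum `L(m) = max_{0 ≤ k ≤ m} S(−k)`. -/
def Lmax (ω : Om) (m : ℕ) : ℤ :=
  Finset.sup' (Finset.range (m + 1)) Finset.nonempty_range_add_one (fun k => Sw ω (-(k : ℤ)))

/-- The ancestor set `𝒜(n) = {n − T(k)∘ϑ^n : k ≥ 0}` (only finite ladder times). -/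
def Aset (ω : Om) (n : ℕ) : Set ℤ :=
  {a | ∃ k j : ℕ, ladderT (dual (n : ℤ) ω) k = (j : ℕ∞) ∧ a = (n : ℤ) - (j : ℤ)}

/-- `mrca(m,n) = max(𝒜(m) ∩ 𝒜(n))`. -/
def mrcaZ (ω : Om) (m n : ℕ) : ℤ := sSup (Aset ω m ∩ Aset ω n)

/-- `χ(m,k) = inf{j ≥ m+1 : S(j) = S(m+1) − k}`. -/
def chiT (ω : Om) (m k : ℕ) : ℕ∞ :=
  sInf {x : ℕ∞ | ∃ j : ℕ, x = (j : ℕ∞) ∧ m + 1 ≤ j ∧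
    Sw ω (j : ℤ) = Sw ω ((m : ℤ) + 1) - (k : ℤ)}

/-- `χ(m) = inf{j ≥ m+1 : S(j) = S(m) − 1}`. -/
def chiF (ω : Om) (m : ℕ) : ℕ∞ :=
  sInf {x : ℕ∞ | ∃ j : ℕ, x = (j : ℕ∞) ∧ m + 1 ≤ j ∧ Sw ω (j : ℤ) = Sw ω (m : ℤ) - 1}

/-- The functional `D_ℓ(𝕊₀^m)` of the spine, expressed through the dual walk:
`D_ℓ = (Σ_{i : 0 < T(i) ≤ min(τ_ℓ, m)} 𝕐(i) − 1_{τ_ℓ ≤ m} π(μ_ℓ)) ∘ ϑ^m`, with `D_0 ≡ 0`. -/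
def Dfun (ω : Om) (m : ℕ) (ℓ : ℤ) : ℝ :=
  if ℓ < 1 then 0 else
    (∑ i ∈ (Finset.Icc 1 m).filter
        (fun i => 0 < ladderT (dual (m : ℤ) ω) i ∧
          ladderT (dual (m : ℤ) ω) i ≤ min (tauUp (dual (m : ℤ) ω) ℓ) (m : ℕ∞)),
      (Ybb (dual (m : ℤ) ω) i : ℝ))
    - (if tauUp (dual (m : ℤ) ω) ℓ ≤ (m : ℕ∞) then (piM (muU (dual (m : ℤ) ω) ℓ) : ℝ) else 0)

/-- `K_j = 2𝒱(j−1) − ℍ(j)`. -/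
def Kt (ω : Om) (j : ℕ) : ℝ := 2 * ∑ k ∈ Finset.range j, (Vc ω (k : ℤ) : ℝ) - (Hchr ω j : ℝ)

/-- The chronological contour process: on `[K_n, K_{n+1}]` it increases at rate `+1` from
`ℍ(n)` up to `ℍ(n) + V_n` and then decreases at rate `−1` down to `ℍ(n+1)`. -/
def contour (ω : Om) (t : ℝ) : ℝ :=
  let n := sSup {j : ℕ | Kt ω j ≤ t}
  min ((Hchr ω n : ℝ) + (t - Kt ω n)) ((Hchr ω (n + 1) : ℝ) + (Kt ω (n + 1) - t))


/-!
Read backwards from `n`, the walk is `S ∘ ϑ^n (j) = S(n) - S(n - j)`. Put `t = τ₀ ∘ ϑ^n` and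
`m = n - t`. Minimality of `t` says that the dual walk is negative on `(0, t)`, i.e. `S(j) > S(n)`
for `m < j < n`; so `ζ₀ ∘ ϑ^n = S(m + 1) - S(n) ≥ 0` and `n` is the first time after `m + 1` at
which `S` reaches the level `S(m + 1) - ζ₀ ∘ ϑ^n`. The ladder condition `S ∘ ϑ^n (t) ≥ 0` says
`S(m) ≤ S(n)`, which together with `S(m + 1) = S(m) + |𝒫_m| - 1` bounds the undershoot by `|𝒫_m| - 1`.
-/

lemma ENat.natCast_mem_of_sInf_eq {s : Set ℕ∞} {t : ℕ} (h : sInf s = t) : (t : ℕ∞) ∈ s := by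
  have hs : s.Nonempty := by
    by_contra hs
    rw [Set.not_nonempty_iff_eq_empty.mp hs, sInf_empty] at h
    exact ENat.top_ne_natCast t h
  exact h ▸ csInf_mem hs

lemma Sw_natCast (ω : Om) (j : ℕ) :
    Sw ω j = ∑ k ∈ Finset.range j, ((Multiset.card (Pc ω k) : ℤ) - 1) := by
  simp [Sw]

lemma Sw_natCast_succ (ω : Om) (j : ℕ) :
    Sw ω ((j + 1 : ℕ) : ℤ) = Sw ω j + ((Multiset.card (Pc ω j) : ℤ) - 1) := by
  rw [Sw_natCast, Sw_natCast, Finset.sum_range_succ]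

lemma Sw_dual_natCast (ω : Om) {n j : ℕ} (hj : j ≤ n) :
    Sw (dual n ω) j = Sw ω n - Sw ω ((n - j : ℕ) : ℤ) := by
  induction j with
  | zero => simp [Sw]
  | succ j ih =>
    have hreflect : (n : ℤ) - j - 1 = ((n - (j + 1) : ℕ) : ℤ) := by omega
    have hsucc : n - j = n - (j + 1) + 1 := by omega
    rw [Sw_natCast_succ, ih (by omega), Pc, dual, hreflect, hsucc, Sw_natCast_succ, Pc]
    ring

lemma tauUp_spec_of_eq {ω : Om} {ℓ : ℤ} {t : ℕ} (ht : tauUp ω ℓ = t) :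
    0 < t ∧ ℓ ≤ Sw ω t ∧ ∀ k : ℕ, 0 < k → k < t → Sw ω k < ℓ := by
  obtain ⟨k, hkt, hkpos, hk⟩ := ENat.natCast_mem_of_sInf_eq ht
  obtain rfl : k = t := by exact_mod_cast hkt.symm
  refine ⟨hkpos, hk, fun j hjpos hjt => ?_⟩
  by_contra! hj
  have : tauUp ω ℓ ≤ j := sInf_le ⟨j, rfl, hjpos, hj⟩
  rw [ht] at this
  exact absurd hjt (not_lt.mpr (by exact_mod_cast this))

lemma zetaU_eq_of_tauUp_eq {ω : Om} {ℓ : ℤ} {t : ℕ} (ht : tauUp ω ℓ = t) :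
    zetaU ω ℓ = ℓ - Sw ω ((t - 1 : ℕ) : ℤ) := by
  have htpos := (tauUp_spec_of_eq ht).1
  rw [zetaU, tauUpN, ht, ENat.toNat_natCast]
  congr 2
  omega

lemma zetaU_nonneg_of_tauUp_eq {ω : Om} {ℓ : ℤ} {t : ℕ} (hℓ : 0 ≤ ℓ) (ht : tauUp ω ℓ = t) :
    0 ≤ zetaU ω ℓ := by
  obtain ⟨htpos, -, hbelow⟩ := tauUp_spec_of_eq ht
  rw [zetaU_eq_of_tauUp_eq ht]
  rcases Nat.lt_or_ge 1 t with h | h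
  · linarith [hbelow (t - 1) (by omega) (by omega)]
  · simp [show t - 1 = 0 by omega, Sw, hℓ]

lemma chiT_eq_of_first_hit {ω : Om} {m k n : ℕ} (hmn : m + 1 ≤ n)
    (hn : Sw ω n = Sw ω ((m : ℤ) + 1) - k)
    (hfirst : ∀ j : ℕ, m + 1 ≤ j → j < n → Sw ω j ≠ Sw ω ((m : ℤ) + 1) - k) :
    chiT ω m k = n := by
  refine le_antisymm (sInf_le ⟨n, rfl, hmn, hn⟩) (le_sInf ?_)
  rintro x ⟨j, rfl, hmj, hj⟩
  by_contra! hjn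
  exact hfirst j hmj (by exact_mod_cast hjn) hj

theorem stmt4 (ω : Om) (n t : ℕ) (ht : tauUp (dual (n : ℤ) ω) 0 = (t : ℕ∞)) (hm : t ≤ n) :
    0 ≤ zetaU (dual (n : ℤ) ω) 0 ∧
    zetaU (dual (n : ℤ) ω) 0 < (Multiset.card (Pc ω ((n - t : ℕ) : ℤ)) : ℤ) ∧
    chiT ω (n - t) (zetaU (dual (n : ℤ) ω) 0).toNat = (n : ℕ∞) := by
  obtain ⟨htpos, hSt, hbelow⟩ := tauUp_spec_of_eq ht
  have hz0 := zetaU_nonneg_of_tauUp_eq le_rfl ht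
  have hsucc : n - (t - 1) = n - t + 1 := by omega
  have hz : zetaU (dual n ω) 0 = Sw ω ((n - t : ℕ) + 1 : ℕ) - Sw ω n := by
    rw [zetaU_eq_of_tauUp_eq ht, Sw_dual_natCast ω (by omega), hsucc]
    ring
  have hmax : Sw ω ((n - t : ℕ) : ℤ) ≤ Sw ω n := by
    linarith [Sw_dual_natCast ω hm]
  refine ⟨hz0, by linarith [Sw_natCast_succ ω (n - t)], ?_⟩
  rw [← Int.toNat_of_nonneg hz0] at hz
  refine chiT_eq_of_first_hit (by omega) (by push_cast at hz ⊢; omega) fun j hmj hjn hj => ?_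
  have hzero : Sw (dual n ω) ((n - j : ℕ) : ℤ) = 0 := by
    rw [Sw_dual_natCast ω (by omega), show n - (n - j) = j by omega]
    push_cast at hz hj
    omega
  exact absurd (hbelow (n - j) (by omega) (by omega)) (by omega)

end
end

section
/- For any 1 ≤ m ≤ n, the shifted spine heights satisfy 0 ≤ π(𝕊_{m−1}ⁿ) − π(𝕊ₘⁿ) ≤ π(𝒫_{m−1}); in particular m ↦ π(𝕊ₘⁿ) is non-increasing, with decrements bounded by the maximal atom of the stick being removed. -/
open scoped Classical NNReal
noncomputable section

/-! Removing the first stick changes the spine only at its root: by induction on the number of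
steps, `𝕊₀^{N+1}` either equals `𝕊₁^{N+1}` or is `𝕊₁^{N+1}` with one extra point measure in
front, obtained from `𝒫₀` by removing some of its largest atoms, so that its largest atom is at
most `π(𝒫₀)`. The extra front entry survives `Φ` because `Φ` only ever touches the last entry
with at least two atoms, and that entry lies in the common part unless there is none. -/

lemma theta_add (a b : ℤ) (ω : Om) : theta (a + b) ω = theta b (theta a ω) := by
  funext k
  simp only [theta, add_assoc]

lemma Pc_theta (a k : ℤ) (ω : Om) : Pc (theta a ω) k = Pc ω (a + k) := rfl

lemma piM_upsilon_le (j : ℕ) (ν : PtM) : piM (upsilon j ν) ≤ piM ν := by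
  refine Multiset.sup_le.mpr fun b hb => Multiset.le_sup ?_
  have hb' : b ∈ (ν.sort (· ≤ ·)).take (Multiset.card ν - j) := by
    simpa [upsilon, Multiset.mem_coe] using hb
  exact (Multiset.mem_sort _).mp (List.mem_of_mem_take hb')

lemma piL_cons (μ : PtM) (Y : List PtM) : piL (μ :: Y) = piM μ + piL Y := by
  simp [piL]

lemma phiSp_singleton_zero (μ : PtM) : phiSp [μ] 0 = [] ∨ phiSp [μ] 0 = [upsilon 1 μ] := by
  by_cases hμ : Multiset.card μ ≤ 1 <;> simp [phiSp, List.dropWhile, hμ]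

lemma phiSp_cons_zero (μ : PtM) (Z : List PtM) :
    phiSp (μ :: Z) 0 = if phiSp Z 0 = [] then phiSp [μ] 0 else μ :: phiSp Z 0 := by
  simp only [phiSp, if_true, List.reverse_cons]
  rw [List.dropWhile_append]
  rcases hd : Z.reverse.dropWhile (fun m => decide (Multiset.card m < 2)) with _ | ⟨h, t⟩
  <;> simp

def ConsLE (b : ℝ≥0) (Y Z : List PtM) : Prop :=
  Y = Z ∨ ∃ μ, Y = μ :: Z ∧ piM μ ≤ b

lemma ConsLE.phiSp {b : ℝ≥0} {Y Z : List PtM} (h : ConsLE b Y Z) (ν : PtM) :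
    ConsLE b (phiSp Y ν) (phiSp Z ν) := by
  rcases h with rfl | ⟨μ, rfl, hμ⟩
  · exact Or.inl rfl
  by_cases hν : ν = 0
  · subst hν
    rw [phiSp_cons_zero]
    split_ifs with hZ
    · rw [hZ]
      rcases phiSp_singleton_zero μ with h | h
      · exact Or.inl h
      · exact Or.inr ⟨upsilon 1 μ, h, (piM_upsilon_le 1 μ).trans hμ⟩
    · exact Or.inr ⟨μ, rfl, hμ⟩
  · exact Or.inr ⟨μ, by simp only [_root_.phiSp, if_neg hν, List.cons_append], hμ⟩

lemma ConsLE.piL_sub_bounds {b : ℝ≥0} {Y Z : List PtM} (h : ConsLE b Y Z) :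
    0 ≤ (piL Y : ℝ) - piL Z ∧ (piL Y : ℝ) - piL Z ≤ b := by
  rcases h with rfl | ⟨μ, rfl, hμ⟩
  · simp
  · rw [piL_cons, NNReal.coe_add, add_sub_cancel_right]
    exact ⟨(piM μ).coe_nonneg, NNReal.coe_le_coe.mpr hμ⟩

lemma consLE_spine_succ_spine_theta_one (ω : Om) (N : ℕ) :
    ConsLE (piM (Pc ω 0)) (spine ω (N + 1)) (spine (theta 1 ω) N) := by
  induction N with
  | zero =>
    by_cases h : Pc ω 0 = 0
    · exact Or.inl (by simp [spine, phiSp, h])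
    · exact Or.inr ⟨Pc ω 0, by simp [spine, phiSp, h], le_rfl⟩
  | succ N ih =>
    have hPc : Pc (theta 1 ω) N = Pc ω ((N + 1 : ℕ) : ℤ) := by
      rw [Pc_theta]; push_cast; rw [add_comm]
    rw [spine.eq_2 ω (N + 1), spine.eq_2 (theta 1 ω) N, hPc]
    exact ih.phiSp _

theorem stmt16 (ω : Om) (m n : ℕ) (h1 : 1 ≤ m) (hmn : m ≤ n) :
    0 ≤ (piL (spine (theta ((m : ℤ) - 1) ω) (n - (m - 1))) : ℝ)
          - (piL (spine (theta (m : ℤ) ω) (n - m)) : ℝ) ∧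
    (piL (spine (theta ((m : ℤ) - 1) ω) (n - (m - 1))) : ℝ)
        - (piL (spine (theta (m : ℤ) ω) (n - m)) : ℝ)
      ≤ (piM (Pc ω ((m : ℤ) - 1)) : ℝ) := by
  obtain ⟨k, rfl⟩ : ∃ k, m = k + 1 := ⟨m - 1, by omega⟩
  have hlen : n - k = n - (k + 1) + 1 := by omega
  have key := (consLE_spine_succ_spine_theta_one (theta k ω) (n - (k + 1))).piL_sub_bounds
  rw [← theta_add, Pc_theta, add_zero] at key
  simpa [hlen] using key

end
end
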